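/- arXiv:2506.17273 — 4 statements merged into one kernel-verified Lean document; each statement's English description precedes it below -/
import Mathlib

section
/- Let X = (ℝ^d)^{K+1} be path space with variables (x_0, …, x_K), let r : X → (0, ∞) be measurable, let φ_0, φ_K : ℝ^d → (0, ∞) be measurable with Z := ∫ φ_0(x_0) r(x_0,…,x_K) φ_K(x_K) dx_0⋯dx_K ∈ (0, ∞), and set p*(x_0,…,x_K) := φ_0(x_0) r(x_0,…,x_K) φ_K(x_K)/Z. Denote by p_0 and p_K the marginal densities of p* in the coordinates x_0 and x_K respectively. Then for every probability density p on X whose x_0-marginal is p_0 and whose x_K-marginal is p_K, and for which all integrals below are finite, the Pythagorean decomposition KL(p‖r) = KL(p‖p*) + KL(p*‖r) holds. -/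
open MeasureTheory Filter Topology

/-! `log (p* / r) = log φ₀(x₀) + (log φ_K(x_K) - log Z)` is a function of `x₀` plus a function
of `x_K`. Since `p` and `p*` have the same `x₀`- and `x_K`-marginals, this function has the same
integral against `p` as against `p*`, and that is exactly `KL(p‖r) - KL(p‖p*) = KL(p*‖r)`.
The two summands need not be integrable on their own, so the marginal identity is applied to
their truncations at level `k` and passed to the limit by dominated convergence, the truncated
sum being dominated by the untruncated one. -/

def clip (n t : ℝ) : ℝ := max (-n) (min t n)

theorem continuous_clip (n : ℝ) : Continuous (clip n) := by
  unfold clip; fun_prop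

theorem abs_clip_le {n : ℝ} (hn : 0 ≤ n) (t : ℝ) : |clip n t| ≤ n :=
  abs_le.2 ⟨le_max_left _ _, max_le (by linarith) (min_le_right _ _)⟩

theorem abs_clip_add_clip_le {n : ℝ} (hn : 0 ≤ n) (a b : ℝ) :
    |clip n a + clip n b| ≤ |a + b| := by
  unfold clip
  grind

theorem tendsto_clip (t : ℝ) : Tendsto (fun k : ℕ => clip k t) atTop (𝓝 t) := by
  refine tendsto_const_nhds.congr' ?_
  filter_upwards [eventually_ge_atTop ⌈|t|⌉₊] with k hk
  have : |t| ≤ k := (Nat.le_ceil _).trans (by exact_mod_cast hk)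
  rw [clip, min_eq_left ((le_abs_self t).trans this),
    max_eq_right (neg_le.1 ((neg_le_abs t).trans this))]

section Projections

variable {α β γ : Type*} [MeasurableSpace α] [MeasurableSpace β] [MeasurableSpace γ]
  {μ : Measure α} {π₁ : α → β} {π₂ : α → γ} {f g : α → ℝ}

theorem MeasureTheory.Integrable.mul_comp_of_abs_le (hf : Integrable f μ)
    {π : α → β} (hπ : Measurable π) {u : β → ℝ} (hu : Measurable u) {C : ℝ}
    (huC : ∀ t, |u t| ≤ C) : Integrable (fun x => f x * u (π x)) μ :=
  hf.mul_bdd (hu.comp hπ).aestronglyMeasurable (.of_forall fun x => huC (π x))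

theorem integral_sub_mul_comp_eq_zero {π : α → β} (hπ : Measurable π)
    (hf : Integrable f μ) (hg : Integrable g μ) {u : β → ℝ} (hu : Measurable u) {C : ℝ}
    (huC : ∀ t, |u t| ≤ C) (h : ∫ x, f x * u (π x) ∂μ = ∫ x, g x * u (π x) ∂μ) :
    ∫ x, (f x - g x) * u (π x) ∂μ = 0 := by
  simp only [sub_mul]
  rw [integral_sub (hf.mul_comp_of_abs_le hπ hu huC) (hg.mul_comp_of_abs_le hπ hu huC), h,
    sub_self]

theorem integral_mul_add_comp_eq (hπ₁ : Measurable π₁) (hπ₂ : Measurable π₂)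
    (hf : Integrable f μ) (hg : Integrable g μ)
    (h₁ : ∀ u : β → ℝ, Measurable u → ∀ C, (∀ t, |u t| ≤ C) →
      ∫ x, f x * u (π₁ x) ∂μ = ∫ x, g x * u (π₁ x) ∂μ)
    (h₂ : ∀ v : γ → ℝ, Measurable v → ∀ C, (∀ t, |v t| ≤ C) →
      ∫ x, f x * v (π₂ x) ∂μ = ∫ x, g x * v (π₂ x) ∂μ)
    {a : β → ℝ} {b : γ → ℝ} (ha : Measurable a) (hb : Measurable b)
    (hfs : Integrable (fun x => f x * (a (π₁ x) + b (π₂ x))) μ)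
    (hgs : Integrable (fun x => g x * (a (π₁ x) + b (π₂ x))) μ) :
    ∫ x, f x * (a (π₁ x) + b (π₂ x)) ∂μ = ∫ x, g x * (a (π₁ x) + b (π₂ x)) ∂μ := by
  have hfg : Integrable (fun x => f x - g x) μ := hf.sub hg
  have hfgs : Integrable (fun x => (f x - g x) * (a (π₁ x) + b (π₂ x))) μ :=
    (hfs.sub hgs).congr (.of_forall fun x => (sub_mul ..).symm)
  set F : ℕ → α → ℝ := fun k x => (f x - g x) * (clip k (a (π₁ x)) + clip k (b (π₂ x)))
  have hF_zero : ∀ k, ∫ x, F k x ∂μ = 0 := by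
    intro k
    have hk : (0 : ℝ) ≤ k := k.cast_nonneg
    have hu : Measurable fun t => clip k (a t) := (continuous_clip k).measurable.comp ha
    have hv : Measurable fun t => clip k (b t) := (continuous_clip k).measurable.comp hb
    have hua : ∀ t, |clip k (a t)| ≤ k := fun t => abs_clip_le hk _
    have hvb : ∀ t, |clip k (b t)| ≤ k := fun t => abs_clip_le hk _
    simp only [F, mul_add]
    rw [integral_add (hfg.mul_comp_of_abs_le hπ₁ hu hua) (hfg.mul_comp_of_abs_le hπ₂ hv hvb),
      integral_sub_mul_comp_eq_zero hπ₁ hf hg hu hua (h₁ _ hu k hua),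
      integral_sub_mul_comp_eq_zero hπ₂ hf hg hv hvb (h₂ _ hv k hvb), add_zero]
  have hF_tendsto : Tendsto (fun k => ∫ x, F k x ∂μ) atTop
      (𝓝 (∫ x, (f x - g x) * (a (π₁ x) + b (π₂ x)) ∂μ)) := by
    refine tendsto_integral_of_dominated_convergence
      (fun x => |(f x - g x) * (a (π₁ x) + b (π₂ x))|) (fun k => ?_) ?_ (fun k => ?_) ?_
    · exact hfg.aestronglyMeasurable.mul
        (((continuous_clip k).measurable.comp (ha.comp hπ₁)).add
          ((continuous_clip k).measurable.comp (hb.comp hπ₂))).aestronglyMeasurable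
    · exact hfgs.abs
    · refine .of_forall fun x => ?_
      simp only [F, Real.norm_eq_abs, abs_mul]
      exact mul_le_mul_of_nonneg_left (abs_clip_add_clip_le k.cast_nonneg _ _) (abs_nonneg _)
    · exact .of_forall fun x =>
        ((tendsto_clip _).add (tendsto_clip _)).const_mul _
  have hlimit := tendsto_nhds_unique hF_tendsto (by simp only [hF_zero]; exact tendsto_const_nhds)
  simp only [sub_mul] at hlimit
  rwa [integral_sub hfs hgs, sub_eq_zero] at hlimit

end Projections

section Marginal

variable {n : ℕ} {X : Fin (n + 1) → Type*} [∀ i, MeasurableSpace (X i)]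
  {μ : ∀ i, Measure (X i)} [∀ i, SigmaFinite (μ i)]

theorem integral_pi_eq_integral_integral_insertNth {G : Type*} [NormedAddCommGroup G]
    [NormedSpace ℝ G] (i : Fin (n + 1)) {F : (∀ j, X j) → G} (hF : Integrable F (.pi μ)) :
    ∫ x, F x ∂.pi μ =
      ∫ t, ∫ y, F (i.insertNth t y) ∂.pi (fun j => μ (i.succAbove j)) ∂μ i := by
  have he := (measurePreserving_piFinSuccAbove μ i).symm
  have hemb := (MeasurableEquiv.piFinSuccAbove X i).symm.measurableEmbedding
  rw [← he.integral_comp hemb]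
  exact integral_prod _ ((he.integrable_comp_emb hemb).2 hF)

theorem integral_mul_comp_eval_eq_of_marginal_eq (i : Fin (n + 1)) {f g : (∀ j, X j) → ℝ}
    (hf : Integrable f (.pi μ)) (hg : Integrable g (.pi μ))
    (hfg : ∀ t, ∫ y, f (i.insertNth t y) ∂.pi (fun j => μ (i.succAbove j)) =
      ∫ y, g (i.insertNth t y) ∂.pi (fun j => μ (i.succAbove j)))
    {u : X i → ℝ} (hu : Measurable u) {C : ℝ} (huC : ∀ t, |u t| ≤ C) :
    ∫ x, f x * u (x i) ∂.pi μ = ∫ x, g x * u (x i) ∂.pi μ := by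
  have hπ := measurable_pi_apply (X := X) i
  rw [integral_pi_eq_integral_integral_insertNth i (hf.mul_comp_of_abs_le hπ hu huC),
    integral_pi_eq_integral_integral_insertNth i (hg.mul_comp_of_abs_le hπ hu huC)]
  simp only [Fin.insertNth_apply_same, integral_mul_const, hfg]

end Marginal

namespace Real

theorem mul_log_div_eq_mul_log_div_add_mul_log_div (p : ℝ) {q r : ℝ} (hq : q ≠ 0)
    (hr : r ≠ 0) : p * log (p / r) = p * log (p / q) + p * log (q / r) := by
  rcases eq_or_ne p 0 with rfl | hp
  · simp
  · rw [log_div hp hr, log_div hp hq, log_div hq hr]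
    ring

end Real

theorem schrodinger_pythagorean_decomposition_general
    {d K : ℕ}
    (r : (Fin (K + 1) → Fin d → ℝ) → ℝ)
    (φ0 φK : (Fin d → ℝ) → ℝ)
    (hrpos : ∀ x, 0 < r x)
    (hφ0 : Measurable φ0) (hφ0pos : ∀ u, 0 < φ0 u)
    (hφK : Measurable φK) (hφKpos : ∀ u, 0 < φK u)
    (Z : ℝ)
    (hZint : Integrable
      (fun x : Fin (K + 1) → Fin d → ℝ => φ0 (x 0) * r x * φK (x (Fin.last K))))
    (hZpos : 0 < Z)
    (pstar : (Fin (K + 1) → Fin d → ℝ) → ℝ)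
    (hpstar : pstar = fun x => φ0 (x 0) * r x * φK (x (Fin.last K)) / Z)
    (p0 pK : (Fin d → ℝ) → ℝ)
    (hp0 : p0 = fun x0 => ∫ y : Fin K → Fin d → ℝ, pstar (Fin.cons x0 y))
    (hpK : pK = fun xK => ∫ y : Fin K → Fin d → ℝ, pstar (Fin.snoc y xK))
    (p : (Fin (K + 1) → Fin d → ℝ) → ℝ)
    (hpnorm : (∫ x, p x) = 1)
    (hpmarg0 : ∀ x0, (∫ y : Fin K → Fin d → ℝ, p (Fin.cons x0 y)) = p0 x0)
    (hpmargK : ∀ xK, (∫ y : Fin K → Fin d → ℝ, p (Fin.snoc y xK)) = pK xK)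
    (h1 : Integrable (fun x => p x * Real.log (p x / r x)))
    (h2 : Integrable (fun x => p x * Real.log (p x / pstar x)))
    (h3 : Integrable (fun x => pstar x * Real.log (pstar x / r x))) :
    (∫ x, p x * Real.log (p x / r x)) =
      (∫ x, p x * Real.log (p x / pstar x)) +
        ∫ x, pstar x * Real.log (pstar x / r x) := by
  have hp_int : Integrable p := integrable_of_integral_eq_one hpnorm
  have hps_int : Integrable pstar := hpstar ▸ hZint.div_const Z
  have hps_pos : ∀ x, 0 < pstar x := fun x => hpstar ▸
    div_pos (mul_pos (mul_pos (hφ0pos _) (hrpos x)) (hφKpos _)) hZpos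
  have hlog : ∀ x, Real.log (pstar x / r x) =
      Real.log (φ0 (x 0)) + (Real.log (φK (x (Fin.last K))) - Real.log Z) := by
    intro x
    simp only [hpstar]
    rw [mul_right_comm, mul_div_right_comm, mul_div_cancel_right₀ _ (hrpos x).ne',
      Real.log_div (mul_pos (hφ0pos _) (hφKpos _)).ne' hZpos.ne',
      Real.log_mul (hφ0pos _).ne' (hφKpos _).ne']
    ring
  have hsplit : ∀ x, p x * Real.log (p x / r x) =
      p x * Real.log (p x / pstar x) + p x * Real.log (pstar x / r x) :=
    fun x => Real.mul_log_div_eq_mul_log_div_add_mul_log_div _ (hps_pos x).ne' (hrpos x).ne'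
  have hcross_int : Integrable (fun x => p x * Real.log (pstar x / r x)) :=
    (h1.sub h2).congr (.of_forall fun x => by simp only [Pi.sub_apply, hsplit x]; ring)
  have hcross :
      ∫ x, p x * Real.log (pstar x / r x) = ∫ x, pstar x * Real.log (pstar x / r x) := by
    simp only [hlog] at hcross_int h3 ⊢
    refine integral_mul_add_comp_eq (measurable_pi_apply 0) (measurable_pi_apply (Fin.last K))
      hp_int hps_int (fun u hu C huC => ?_) (fun v hv C hvC => ?_)
      (Real.measurable_log.comp hφ0) ((Real.measurable_log.comp hφK).sub measurable_const)
      hcross_int h3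
    · refine integral_mul_comp_eval_eq_of_marginal_eq 0 hp_int hps_int ?_ hu huC
      simp only [Fin.insertNth_zero']
      exact fun t => (hpmarg0 t).trans (congrFun hp0 t)
    · refine integral_mul_comp_eval_eq_of_marginal_eq (Fin.last K) hp_int hps_int ?_ hv hvC
      simp only [Fin.insertNth_last']
      exact fun t => (hpmargK t).trans (congrFun hpK t)
  rw [integral_congr_ae (.of_forall hsplit), integral_add h2 hcross_int, hcross]

/-- **Pythagorean decomposition for the Schrödinger bridge.** On path space
`X = (ℝ^d)^{K+1}` with reference `r > 0` and Gibbs potentials `φ₀, φ_K > 0`, let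
`p*(x) := φ₀(x₀) r(x) φ_K(x_K) / Z` with `Z ∈ (0,∞)` the total integral, and let
`p₀, p_K` be the `x₀`- and `x_K`-marginals of `p*`. Then every probability density `p`
on path space with `x₀`-marginal `p₀` and `x_K`-marginal `p_K`, for which all the
integrals involved are finite, satisfies `KL(p‖r) = KL(p‖p*) + KL(p*‖r)`. -/
theorem schrodinger_pythagorean_decomposition
    {d K : ℕ}
    (r : (Fin (K + 1) → Fin d → ℝ) → ℝ)
    (φ0 φK : (Fin d → ℝ) → ℝ)
    (hr : Measurable r) (hrpos : ∀ x, 0 < r x)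
    (hφ0 : Measurable φ0) (hφ0pos : ∀ u, 0 < φ0 u)
    (hφK : Measurable φK) (hφKpos : ∀ u, 0 < φK u)
    (Z : ℝ)
    (hZ : Z = ∫ x : Fin (K + 1) → Fin d → ℝ, φ0 (x 0) * r x * φK (x (Fin.last K)))
    (hZint : Integrable
      (fun x : Fin (K + 1) → Fin d → ℝ => φ0 (x 0) * r x * φK (x (Fin.last K))))
    (hZpos : 0 < Z)
    (pstar : (Fin (K + 1) → Fin d → ℝ) → ℝ)
    (hpstar : pstar = fun x => φ0 (x 0) * r x * φK (x (Fin.last K)) / Z)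
    (p0 pK : (Fin d → ℝ) → ℝ)
    (hp0 : p0 = fun x0 => ∫ y : Fin K → Fin d → ℝ, pstar (Fin.cons x0 y))
    (hpK : pK = fun xK => ∫ y : Fin K → Fin d → ℝ, pstar (Fin.snoc y xK))
    (p : (Fin (K + 1) → Fin d → ℝ) → ℝ)
    (hp : Measurable p) (hppos : ∀ x, 0 ≤ p x)
    (hpnorm : (∫ x, p x) = 1)
    (hpmarg0 : ∀ x0, (∫ y : Fin K → Fin d → ℝ, p (Fin.cons x0 y)) = p0 x0)
    (hpmargK : ∀ xK, (∫ y : Fin K → Fin d → ℝ, p (Fin.snoc y xK)) = pK xK)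
    (h1 : Integrable (fun x => p x * Real.log (p x / r x)))
    (h2 : Integrable (fun x => p x * Real.log (p x / pstar x)))
    (h3 : Integrable (fun x => pstar x * Real.log (pstar x / r x))) :
    (∫ x, p x * Real.log (p x / r x)) =
      (∫ x, p x * Real.log (p x / pstar x)) +
        ∫ x, pstar x * Real.log (pstar x / r x) :=
  schrodinger_pythagorean_decomposition_general r φ0 φK hrpos hφ0 hφ0pos hφK hφKpos Z hZint hZpos
    pstar hpstar p0 pK hp0 hpK p hpnorm hpmarg0 hpmargK h1 h2 h3
end

section
/- Let X = (ℝ^d)^{K+1}, let r : X → (0, ∞) be measurable, let φ_0, φ_K : ℝ^d → (0, ∞) be measurable with Z := ∫ φ_0(x_0) r(x_0,…,x_K) φ_K(x_K) dx_0⋯dx_K ∈ (0, ∞), and set p* := φ_0 · r · φ_K / Z. Denote by p_0 and p_K the x_0- and x_K-marginals of p*. Then p* is the unique (up to Lebesgue-a.e. equality) minimizer of p ↦ KL(p‖r) over all probability densities p on X with x_0-marginal p_0, x_K-marginal p_K, and KL(p‖r) finite. -/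
/-!
With `F x = log φ₀(x₀) + log φ_K(x_K)` we have `log (p*/r) = F - log Z`, and pointwise
`p log (p/r) = p log (p*/r) + p* klFun (p/p*) + p - p*`. Hence
`KL(p‖r) - KL(p*‖r) = ∫ p* klFun (p/p*) ≥ 0`, with equality only if `p = p*` a.e.,
as soon as `∫ p F = ∫ p* F`.

That identity holds because `F = U - V` with `U` a function of `x₀` and `V` one of `x_K`, whose
laws under `p` and under `p*` agree by the marginal constraints. Neither `U` nor `V` need be
integrable, so the laws are compared through the layer-cake formula
`∫ (U - V)⁺ dμ = ∫ μ {V ≤ t < U} dt`, which yields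
`∫ (U - V)⁺ p + ∫ (U - V)⁻ p* = ∫ (U - V)⁻ p + ∫ (U - V)⁺ p*`; the positive part of `p F` is
controlled by `KL(p‖r)`.
-/

open MeasureTheory Set InformationTheory Real

variable {X : Type*} [MeasurableSpace X]

theorem integrable_of_lintegral_ofReal_ne_top {μ : Measure X} {f : X → ℝ}
    (hf : AEStronglyMeasurable f μ) (hpos : ∫⁻ x, ENNReal.ofReal (f x) ∂μ ≠ ⊤)
    (hneg : ∫⁻ x, ENNReal.ofReal (-f x) ∂μ ≠ ⊤) :
    Integrable f μ := by
  refine ⟨hf, ?_⟩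
  calc ∫⁻ x, ‖f x‖ₑ ∂μ
        ≤ ∫⁻ x, ENNReal.ofReal (f x) + ENNReal.ofReal (-f x) ∂μ := lintegral_mono fun x => by
          rw [Real.enorm_eq_ofReal_abs, abs_eq_max_neg, ENNReal.ofReal_max]
          exact max_le_add_of_nonneg bot_le bot_le
    _ = ∫⁻ x, ENNReal.ofReal (f x) ∂μ + ∫⁻ x, ENNReal.ofReal (-f x) ∂μ :=
        lintegral_add_left' hf.aemeasurable.ennreal_ofReal _
    _ < ⊤ := by finiteness

section LayerCake

variable {U V : X → ℝ}

theorem measurableSet_le_and_lt (hU : Measurable U) (hV : Measurable V) :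
    MeasurableSet {z : X × ℝ | V z.1 ≤ z.2 ∧ z.2 < U z.1} :=
  (measurableSet_le (hV.comp measurable_fst) measurable_snd).inter
    (measurableSet_lt measurable_snd (hU.comp measurable_fst))

theorem lintegral_ofReal_sub_eq_lintegral_measure (μ : Measure X) [SFinite μ]
    (hU : Measurable U) (hV : Measurable V) :
    ∫⁻ x, ENNReal.ofReal (U x - V x) ∂μ = ∫⁻ t, μ {x | V x ≤ t ∧ t < U x} := calc
  _ = ∫⁻ x, volume (Ico (V x) (U x)) ∂μ := by simp_rw [Real.volume_Ico]
  _ = μ.prod volume {z : X × ℝ | V z.1 ≤ z.2 ∧ z.2 < U z.1} :=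
    (Measure.prod_apply (measurableSet_le_and_lt hU hV)).symm
  _ = _ := Measure.prod_apply_symm (measurableSet_le_and_lt hU hV)

theorem lintegral_ofReal_sub_add_lintegral_ofReal_sub_comm (P Q : Measure X)
    [IsFiniteMeasure P] [SFinite Q] (hU : Measurable U) (hV : Measurable V)
    (hUPQ : P.map U = Q.map U) (hVPQ : P.map V = Q.map V) :
    ∫⁻ x, ENNReal.ofReal (U x - V x) ∂P + ∫⁻ x, ENNReal.ofReal (V x - U x) ∂Q
      = ∫⁻ x, ENNReal.ofReal (V x - U x) ∂P + ∫⁻ x, ENNReal.ofReal (U x - V x) ∂Q := by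
  simp only [lintegral_ofReal_sub_eq_lintegral_measure _ hU hV,
    lintegral_ofReal_sub_eq_lintegral_measure _ hV hU]
  have hmeas (W W' : X → ℝ) (hW : Measurable W) (hW' : Measurable W') :
      Measurable fun t => P {x | W' x ≤ t ∧ t < W x} :=
    measurable_measure_prodMk_right (measurableSet_le_and_lt hW hW')
  rw [← lintegral_add_left (hmeas U V hU hV), ← lintegral_add_left (hmeas V U hV hU)]
  refine lintegral_congr fun t => ?_
  set A := {x | t < U x}
  set B := {x | t < V x}
  have hlaw {W : X → ℝ} (hW : Measurable W) (h : P.map W = Q.map W) :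
      P {x | t < W x} = Q {x | t < W x} := by
    have := congrArg (· (Ioi t)) h
    rwa [Measure.map_apply hW measurableSet_Ioi, Measure.map_apply hW measurableSet_Ioi] at this
  have hPA : P A = Q A := hlaw hU hUPQ
  have hPB : P B = Q B := hlaw hV hVPQ
  have hunion (μ : Measure X) : μ (A \ B) + μ B = μ (B \ A) + μ A := by
    rw [← measure_union disjoint_sdiff_left (measurableSet_lt measurable_const hV),
      ← measure_union disjoint_sdiff_left (measurableSet_lt measurable_const hU),
      sdiff_union_self, sdiff_union_self, union_comm]
  have hAB : {x | V x ≤ t ∧ t < U x} = A \ B := by ext; simp [A, B, and_comm]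
  have hBA : {x | U x ≤ t ∧ t < V x} = B \ A := by ext; simp [A, B, and_comm]
  rw [hAB, hBA, ← ENNReal.add_left_inj (a := P B + Q A) (by rw [← hPA]; finiteness)]
  calc P (A \ B) + Q (B \ A) + (P B + Q A)
      = (P (A \ B) + P B) + (Q (B \ A) + Q A) := by ring
    _ = (P (B \ A) + P A) + (Q (A \ B) + Q B) := by rw [hunion P, hunion Q]
    _ = P (B \ A) + Q (A \ B) + (P B + Q A) := by rw [hPA, hPB]; ring

theorem integrable_sub_and_integral_sub_eq_of_map_eq {P Q : Measure X}
    [IsFiniteMeasure P] [SFinite Q] (hU : Measurable U) (hV : Measurable V)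
    (hUPQ : P.map U = Q.map U) (hVPQ : P.map V = Q.map V)
    (hQ : Integrable (fun x => U x - V x) Q)
    (hP : ∫⁻ x, ENNReal.ofReal (U x - V x) ∂P ≠ ⊤) :
    Integrable (fun x => U x - V x) P ∧ ∫ x, U x - V x ∂P = ∫ x, U x - V x ∂Q := by
  have hcomm := lintegral_ofReal_sub_add_lintegral_ofReal_sub_comm P Q hU hV hUPQ hVPQ
  have hQpos : ∫⁻ x, ENNReal.ofReal (U x - V x) ∂Q ≠ ⊤ := hQ.lintegral_lt_top.ne
  have hQneg : ∫⁻ x, ENNReal.ofReal (V x - U x) ∂Q ≠ ⊤ := by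
    simpa using hQ.neg.lintegral_lt_top.ne
  have hPneg : ∫⁻ x, ENNReal.ofReal (V x - U x) ∂P ≠ ⊤ :=
    ne_top_of_le_ne_top (ENNReal.add_ne_top.2 ⟨hP, hQneg⟩) (hcomm.symm ▸ le_self_add)
  have hPint : Integrable (fun x => U x - V x) P :=
    integrable_of_lintegral_ofReal_ne_top (hU.sub hV).aestronglyMeasurable hP
      (by simpa using hPneg)
  refine ⟨hPint, ?_⟩
  rw [integral_eq_lintegral_pos_part_sub_lintegral_neg_part hPint,
    integral_eq_lintegral_pos_part_sub_lintegral_neg_part hQ]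
  have := congrArg ENNReal.toReal hcomm
  rw [ENNReal.toReal_add hP hQneg, ENNReal.toReal_add hPneg hQpos] at this
  simp only [neg_sub]
  linarith

end LayerCake

section WithDensityOfReal

variable {μ : Measure X} {p : X → ℝ}

theorem integrable_withDensity_ofReal_iff (hp : Measurable p) (hp0 : 0 ≤ p) {g : X → ℝ} :
    Integrable g (μ.withDensity fun x => ENNReal.ofReal (p x))
      ↔ Integrable (fun x => p x * g x) μ := by
  rw [integrable_withDensity_iff_integrable_smul' hp.ennreal_ofReal
    (ae_of_all _ fun _ => ENNReal.ofReal_lt_top)]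
  simp [ENNReal.toReal_ofReal (hp0 _)]

theorem integral_withDensity_ofReal (hp : Measurable p) (hp0 : 0 ≤ p) (g : X → ℝ) :
    ∫ x, g x ∂μ.withDensity (fun x => ENNReal.ofReal (p x)) = ∫ x, p x * g x ∂μ := by
  rw [integral_withDensity_eq_integral_toReal_smul hp.ennreal_ofReal
    (ae_of_all _ fun _ => ENNReal.ofReal_lt_top)]
  simp [ENNReal.toReal_ofReal (hp0 _)]

theorem lintegral_ofReal_withDensity_ofReal (hp : Measurable p) (hp0 : 0 ≤ p) {g : X → ℝ}
    (hg : Measurable g) :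
    ∫⁻ x, ENNReal.ofReal (g x) ∂μ.withDensity (fun x => ENNReal.ofReal (p x))
      = ∫⁻ x, ENNReal.ofReal (p x * g x) ∂μ := by
  rw [lintegral_withDensity_eq_lintegral_mul _ hp.ennreal_ofReal hg.ennreal_ofReal]
  simp [ENNReal.ofReal_mul (hp0 _)]

theorem integrable_mul_sub_and_integral_mul_sub_eq_of_map_eq [SFinite μ] {q U V : X → ℝ}
    (hp : Measurable p) (hq : Measurable q) (hp0 : 0 ≤ p) (hq0 : 0 ≤ q) (hpi : Integrable p μ)
    (hU : Measurable U) (hV : Measurable V)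
    (hUpq : (μ.withDensity fun x => ENNReal.ofReal (p x)).map U
      = (μ.withDensity fun x => ENNReal.ofReal (q x)).map U)
    (hVpq : (μ.withDensity fun x => ENNReal.ofReal (p x)).map V
      = (μ.withDensity fun x => ENNReal.ofReal (q x)).map V)
    (hqUV : Integrable (fun x => q x * (U x - V x)) μ)
    (hpUV : ∫⁻ x, ENNReal.ofReal (p x * (U x - V x)) ∂μ ≠ ⊤) :
    Integrable (fun x => p x * (U x - V x)) μ
      ∧ ∫ x, p x * (U x - V x) ∂μ = ∫ x, q x * (U x - V x) ∂μ := by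
  have := isFiniteMeasure_withDensity_ofReal hpi.2
  rw [← integrable_withDensity_ofReal_iff hp hp0, ← integral_withDensity_ofReal hp hp0,
    ← integral_withDensity_ofReal hq hq0]
  refine integrable_sub_and_integral_sub_eq_of_map_eq hU hV hUpq hVpq
    ((integrable_withDensity_ofReal_iff hq hq0).2 hqUV) ?_
  rwa [lintegral_ofReal_withDensity_ofReal (g := fun x => U x - V x) hp hp0 (hU.sub hV)]

end WithDensityOfReal

section Marginal

variable {E : Type*} [MeasureSpace E] [SigmaFinite (volume : Measure E)] {n : ℕ}
  {p : (Fin (n + 1) → E) → ℝ}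

theorem lintegral_ofReal_mul_comp_eval (i : Fin (n + 1)) (hp : Measurable p) (hp0 : 0 ≤ p)
    (hpi : Integrable p) {H : E → ENNReal} (hH : Measurable H) :
    ∫⁻ x, ENNReal.ofReal (p x) * H (x i)
      = ∫⁻ z, ENNReal.ofReal (∫ y, p (i.insertNth z y)) * H z := by
  have he := (volume_preserving_piFinSuccAbove (fun _ : Fin (n + 1) => E) i).symm
  have hsymm (w : E × (Fin n → E)) :
      (MeasurableEquiv.piFinSuccAbove (fun _ => E) i).symm w = i.insertNth w.1 w.2 := rfl
  have hslice : ∀ᵐ z, Integrable (fun y => p (i.insertNth z y)) :=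
    (he.integrable_comp_emb (MeasurableEquiv.measurableEmbedding _) |>.2 hpi).prod_right_ae
  rw [← he.lintegral_comp_emb (MeasurableEquiv.measurableEmbedding _)
    (fun x => ENNReal.ofReal (p x) * H (x i)), Measure.volume_eq_prod, lintegral_prod]
  · refine lintegral_congr_ae (hslice.mono fun z hz => ?_)
    simp only [hsymm, Fin.insertNth_apply_same]
    rw [lintegral_mul_const, ofReal_integral_eq_lintegral_ofReal hz (ae_of_all _ fun _ => hp0 _)]
    exact (hp.comp ((MeasurableEquiv.piFinSuccAbove _ i).symm.measurable.comp
      measurable_prodMk_left)).ennreal_ofReal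
  · exact ((hp.comp (MeasurableEquiv.measurable _)).ennreal_ofReal.mul
      (hH.comp ((measurable_pi_apply i).comp (MeasurableEquiv.measurable _)))).aemeasurable

theorem map_eval_withDensity_ofReal (i : Fin (n + 1)) (hp : Measurable p) (hp0 : 0 ≤ p)
    (hpi : Integrable p) :
    (volume.withDensity fun x => ENNReal.ofReal (p x)).map (fun x => x i)
      = volume.withDensity fun z => ENNReal.ofReal (∫ y, p (i.insertNth z y)) := by
  have hmarg : Measurable fun z => ∫ y, p (i.insertNth z y) :=
    (hp.comp (MeasurableEquiv.piFinSuccAbove (fun _ => E) i).symm.measurable).stronglyMeasurable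
      |>.integral_prod_right' |>.measurable
  refine Measure.ext_of_lintegral _ fun H hH => ?_
  rw [lintegral_map hH (measurable_pi_apply i),
    lintegral_withDensity_eq_lintegral_mul _ hp.ennreal_ofReal (g := fun x => H (x i))
      (by fun_prop),
    lintegral_withDensity_eq_lintegral_mul _ hmarg.ennreal_ofReal hH]
  exact lintegral_ofReal_mul_comp_eval i hp hp0 hpi hH

theorem map_comp_eval_withDensity_ofReal_eq {β : Type*} [MeasurableSpace β] (i : Fin (n + 1))
    {q : (Fin (n + 1) → E) → ℝ} (hp : Measurable p) (hq : Measurable q) (hp0 : 0 ≤ p)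
    (hq0 : 0 ≤ q) (hpi : Integrable p) (hqi : Integrable q)
    (hpq : ∀ z, ∫ y, p (i.insertNth z y) = ∫ y, q (i.insertNth z y))
    {g : E → β} (hg : Measurable g) :
    (volume.withDensity fun x => ENNReal.ofReal (p x)).map (fun x => g (x i))
      = (volume.withDensity fun x => ENNReal.ofReal (q x)).map (fun x => g (x i)) := by
  change Measure.map (g ∘ fun x : Fin (n + 1) → E => x i) _
    = Measure.map (g ∘ fun x : Fin (n + 1) → E => x i) _
  rw [← Measure.map_map hg (measurable_pi_apply i),
    ← Measure.map_map hg (measurable_pi_apply i), map_eval_withDensity_ofReal i hp hp0 hpi,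
    map_eval_withDensity_ofReal i hq hq0 hqi]
  simp_rw [hpq]

end Marginal

section Gibbs

theorem mul_log_div_eq_mul_log_div_add_klFun (a : ℝ) {q r : ℝ} (hq : 0 < q) (hr : 0 < r) :
    a * log (a / r) = a * log (q / r) + q * klFun (a / q) + a - q := by
  rcases eq_or_ne a 0 with rfl | ha
  · simp [klFun_zero]
  rw [klFun_apply, log_div ha hr.ne', log_div hq.ne' hr.ne', log_div ha hq.ne']
  field_simp
  ring

variable {μ : Measure X} {p q r : X → ℝ}

theorem lintegral_ofReal_mul_log_div_ne_top (hp0 : 0 ≤ p) (hq : ∀ x, 0 < q x)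
    (hr : ∀ x, 0 < r x) (hpi : Integrable p μ) (hqi : Integrable q μ)
    (hKL : Integrable (fun x => p x * log (p x / r x)) μ) :
    ∫⁻ x, ENNReal.ofReal (p x * log (q x / r x)) ∂μ ≠ ⊤ := by
  refine ne_top_of_le_ne_top ((hKL.sub hpi).add hqi).lintegral_lt_top.ne
    (lintegral_mono fun x => ENNReal.ofReal_le_ofReal ?_)
  have hkl := mul_nonneg (hq x).le (klFun_nonneg (div_nonneg (hp0 x) (hq x).le))
  show _ ≤ p x * log (p x / r x) - p x + q x
  linarith [mul_log_div_eq_mul_log_div_add_klFun (p x) (hq x) (hr x)]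

theorem integral_mul_log_div_le_and_ae_eq (hp0 : 0 ≤ p) (hq : ∀ x, 0 < q x)
    (hr : ∀ x, 0 < r x) (hpi : Integrable p μ) (hqi : Integrable q μ)
    (hpq : ∫ x, p x ∂μ = ∫ x, q x ∂μ)
    (hpqr : Integrable (fun x => p x * log (q x / r x)) μ)
    (hpqr_eq : ∫ x, p x * log (q x / r x) ∂μ = ∫ x, q x * log (q x / r x) ∂μ)
    (hKL : Integrable (fun x => p x * log (p x / r x)) μ) :
    ∫ x, q x * log (q x / r x) ∂μ ≤ ∫ x, p x * log (p x / r x) ∂μ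
      ∧ (∫ x, p x * log (p x / r x) ∂μ = ∫ x, q x * log (q x / r x) ∂μ → p =ᵐ[μ] q) := by
  set D := fun x => q x * klFun (p x / q x)
  have hD (x : X) : D x = p x * log (p x / r x) - p x * log (q x / r x) - p x + q x := by
    linarith [mul_log_div_eq_mul_log_div_add_klFun (p x) (hq x) (hr x)]
  have hD0 : 0 ≤ D := fun x =>
    mul_nonneg (hq x).le (klFun_nonneg (div_nonneg (hp0 x) (hq x).le))
  have h₁ : Integrable (fun x => p x * log (p x / r x) - p x * log (q x / r x)) μ :=
    hKL.sub hpqr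
  have h₂ : Integrable (fun x => p x * log (p x / r x) - p x * log (q x / r x) - p x) μ :=
    h₁.sub hpi
  have hDi : Integrable D μ := (h₂.add hqi).congr (ae_of_all _ fun x => (hD x).symm)
  have hDint : ∫ x, D x ∂μ = ∫ x, p x * log (p x / r x) ∂μ - ∫ x, q x * log (q x / r x) ∂μ := by
    rw [integral_congr_ae (ae_of_all _ hD), integral_add h₂ hqi, integral_sub h₁ hpi,
      integral_sub hKL hpqr, hpq, hpqr_eq]
    ring
  refine ⟨by linarith [integral_nonneg (μ := μ) hD0], fun hKLeq => ?_⟩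
  have hDzero : D =ᵐ[μ] 0 := (integral_eq_zero_iff_of_nonneg hD0 hDi).1 (by linarith)
  filter_upwards [hDzero] with x hx
  have hkl := (mul_eq_zero.1 hx).resolve_left (hq x).ne'
  rwa [klFun_eq_zero_iff (div_nonneg (hp0 x) (hq x).le), div_eq_one_iff_eq (hq x).ne']
    at hkl

end Gibbs

theorem log_mul_mul_div_div_eq {a ρ b Z : ℝ} (ha : 0 < a) (hρ : 0 < ρ) (hb : 0 < b)
    (hZ : 0 < Z) : log (a * ρ * b / Z / ρ) = log a - (log Z - log b) := by
  rw [div_right_comm, mul_right_comm, mul_div_cancel_right₀ _ hρ.ne',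
    log_div (mul_pos ha hb).ne' hZ.ne', log_mul ha.ne' hb.ne']
  ring

/-- **`p*` is the unique minimizer of `KL(·‖r)` under the marginal constraints.** On path
space `X = (ℝ^d)^{K+1}` with reference `r > 0` and Gibbs potentials `φ₀, φ_K > 0`, let
`p*(x) := φ₀(x₀) r(x) φ_K(x_K) / Z` with `Z ∈ (0,∞)` the total integral, and let
`p₀, p_K` be the `x₀`- and `x_K`-marginals of `p*`. Then `p*` minimizes
`p ↦ KL(p‖r) = ∫ p log(p/r)` over all probability densities `p` on path space with
`x₀`-marginal `p₀`, `x_K`-marginal `p_K` and finite `KL(p‖r)`, and any such minimizer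
coincides with `p*` Lebesgue-almost everywhere. -/
theorem schrodinger_bridge_unique_minimizer
    {d K : ℕ}
    (r : (Fin (K + 1) → Fin d → ℝ) → ℝ)
    (φ0 φK : (Fin d → ℝ) → ℝ)
    (hr : Measurable r) (hrpos : ∀ x, 0 < r x)
    (hφ0 : Measurable φ0) (hφ0pos : ∀ u, 0 < φ0 u)
    (hφK : Measurable φK) (hφKpos : ∀ u, 0 < φK u)
    (Z : ℝ)
    (hZ : Z = ∫ x : Fin (K + 1) → Fin d → ℝ, φ0 (x 0) * r x * φK (x (Fin.last K)))
    (hZint : Integrable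
      (fun x : Fin (K + 1) → Fin d → ℝ => φ0 (x 0) * r x * φK (x (Fin.last K))))
    (hZpos : 0 < Z)
    (pstar : (Fin (K + 1) → Fin d → ℝ) → ℝ)
    (hpstar : pstar = fun x => φ0 (x 0) * r x * φK (x (Fin.last K)) / Z)
    (p0 pK : (Fin d → ℝ) → ℝ)
    (hp0 : p0 = fun x0 => ∫ y : Fin K → Fin d → ℝ, pstar (Fin.cons x0 y))
    (hpK : pK = fun xK => ∫ y : Fin K → Fin d → ℝ, pstar (Fin.snoc y xK))
    (hKLstar : Integrable (fun x => pstar x * Real.log (pstar x / r x))) :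
    ∀ p : (Fin (K + 1) → Fin d → ℝ) → ℝ,
      Measurable p → (∀ x, 0 ≤ p x) → (∫ x, p x) = 1 →
      (∀ x0, (∫ y : Fin K → Fin d → ℝ, p (Fin.cons x0 y)) = p0 x0) →
      (∀ xK, (∫ y : Fin K → Fin d → ℝ, p (Fin.snoc y xK)) = pK xK) →
      Integrable (fun x => p x * Real.log (p x / r x)) →
      (∫ x, pstar x * Real.log (pstar x / r x)) ≤
          (∫ x, p x * Real.log (p x / r x)) ∧
        ((∫ x, p x * Real.log (p x / r x)) =
            (∫ x, pstar x * Real.log (pstar x / r x)) →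
          p =ᵐ[volume] pstar) := by
  intro p hpm hpnn hp1 hm0 hmK hKLp
  subst hp0 hpK
  have hpi : Integrable p := Integrable.of_integral_ne_zero (by rw [hp1]; exact one_ne_zero)
  have hpstar_pos (x) : 0 < pstar x := by
    rw [hpstar]; exact div_pos (mul_pos (mul_pos (hφ0pos _) (hrpos _)) (hφKpos _)) hZpos
  have hpstar_meas : Measurable pstar := by rw [hpstar]; fun_prop
  have hpstar_int : Integrable pstar := hpstar ▸ hZint.div_const Z
  have hpstar_one : ∫ x, pstar x = 1 := by rw [hpstar, integral_div, ← hZ, div_self hZpos.ne']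
  have hlog (x : Fin (K + 1) → Fin d → ℝ) :
      log (pstar x / r x) = log (φ0 (x 0)) - (log Z - log (φK (x (Fin.last K)))) := by
    rw [hpstar]; exact log_mul_mul_div_div_eq (hφ0pos _) (hrpos x) (hφKpos _) hZpos
  have hpstar_nonneg : 0 ≤ pstar := fun x => (hpstar_pos x).le
  obtain ⟨hpqr, hpqr_eq⟩ := integrable_mul_sub_and_integral_mul_sub_eq_of_map_eq
    (U := fun x => log (φ0 (x 0))) (V := fun x => log Z - log (φK (x (Fin.last K))))
    hpm hpstar_meas hpnn hpstar_nonneg hpi (by fun_prop) (by fun_prop)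
    (map_comp_eval_withDensity_ofReal_eq 0 hpm hpstar_meas hpnn hpstar_nonneg hpi hpstar_int
      (fun z => by simpa only [Fin.insertNth_zero'] using hm0 z) hφ0.log)
    (map_comp_eval_withDensity_ofReal_eq (Fin.last K) hpm hpstar_meas hpnn hpstar_nonneg hpi
      hpstar_int (fun z => by simpa only [Fin.insertNth_last'] using hmK z)
      (measurable_const.sub hφK.log))
    (by simpa only [hlog] using hKLstar)
    (by simpa only [hlog] using
      lintegral_ofReal_mul_log_div_ne_top hpnn hpstar_pos hrpos hpi hpstar_int hKLp)
  simp_rw [← hlog] at hpqr hpqr_eq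
  exact integral_mul_log_div_le_and_ae_eq hpnn hpstar_pos hrpos hpi hpstar_int
    (by rw [hp1, hpstar_one]) hpqr hpqr_eq hKLp
end

section
/- Let r_0, …, r_{K-1} : ℝ^d × ℝ^d → (0, ∞), φ_0, φ_K : ℝ^d → (0, ∞) be measurable, set p*(x_0, …, x_K) := φ_0(x_0) (∏_{k=0}^{K-1} r_k(x_k, x_{k+1})) φ_K(x_K) / Z with Z ∈ (0, ∞) the total integral, and let φ⁻_k be the backward potentials, assumed finite and strictly positive everywhere. Denote by p*_{0:k} the marginal of p* on (x_0, …, x_k). Then for every k ∈ {0, …, K−1} and all (x_0, …, x_{k+1}), the conditional density p*_{0:k+1}(x_0, …, x_{k+1}) / p*_{0:k}(x_0, …, x_k) equals r_k(x_k, x_{k+1}) φ⁻_{k+1}(x_{k+1}) / φ⁻_k(x_k); in particular it depends only on (x_k, x_{k+1}), so p* is a Markov chain with this transition kernel. -/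
open MeasureTheory

/-- Backward potentials indexed by the number of remaining steps: `backward K r φK j`
is the potential `φ⁻_{K-j}`, i.e. `backward K r φK 0 = φ_K` and
`φ⁻_{K-(j+1)}(x) = ∫ r_{K-(j+1)}(x, y) φ⁻_{K-j}(y) dy`. -/
noncomputable def backward {V : Type*} [MeasureSpace V]
    (K : ℕ) (r : ℕ → V → V → ℝ) (φK : V → ℝ) : ℕ → V → ℝ
  | 0 => φK
  | j + 1 => fun x => ∫ y, r (K - (j + 1)) x y * backward K r φK j y

/-- The full path on `{0, …, K}` whose first `k+1` coordinates are those of `x` and whose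
remaining `K - k` coordinates `x_{k+1}, …, x_K` are given by `y`. -/
def glue {V : Type*} (K k : ℕ) (x : Fin (K + 1) → V) (y : Fin (K - k) → V) :
    Fin (K + 1) → V :=
  fun i => if h : (i : ℕ) ≤ k then x i
    else y ⟨(i : ℕ) - (k + 1), by have := i.isLt; omega⟩

/-!
Integrating out the free tail `x_{k+1}, …, x_K` of the unnormalised density
`φ₀(x₀) ∏_j r_j(x_j, x_{j+1}) φ_K(x_K)` leaves `φ₀(x₀) ∏_{j<k} r_j(x_j, x_{j+1}) · T(x_k)`,
where the tail integral `T(a) = ∫ ∏_{j≥k} r_j(x_j, x_{j+1}) φ_K(x_K) d(x_{k+1}, …, x_K)`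
with `x_k = a` is the backward potential `φ⁻_k(a)`: integrating over `x_{k+1}` first (Fubini)
turns the recursion defining `φ⁻` into an induction on the length of the tail. In the ratio of
the marginals at `k + 1` and `k` everything but `r_k(x_k, x_{k+1}) φ⁻_{k+1}(x_{k+1}) / φ⁻_k(x_k)`
cancels.
-/

namespace OptimalCoupling

variable {V : Type*}

def chainWeight (r : ℕ → V → V → ℝ) (s : ℕ) {n : ℕ} (p : Fin (n + 1) → V) : ℝ :=
  ∏ j : Fin n, r (s + j) (p j.castSucc) (p j.succ)

theorem chainWeight_zero (r : ℕ → V → V → ℝ) {n : ℕ} (p : Fin (n + 1) → V) :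
    chainWeight r 0 p = ∏ j : Fin n, r j (p j.castSucc) (p j.succ) := by
  simp [chainWeight]

theorem chainWeight_cons (r : ℕ → V → V → ℝ) (s : ℕ) {n : ℕ} (a : V) (p : Fin (n + 1) → V) :
    chainWeight r s (Fin.cons a p : Fin (n + 2) → V) = r s a (p 0) * chainWeight r (s + 1) p := by
  simp [chainWeight, Fin.prod_univ_succ, add_assoc, add_comm 1]

theorem chainWeight_eq_mul_last (r : ℕ → V → V → ℝ) (s : ℕ) {n : ℕ} (p : Fin (n + 2) → V) :
    chainWeight r s p = chainWeight r s (fun i => p i.castSucc) *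
      r (s + n) (p (Fin.last n).castSucc) (p (Fin.last (n + 1))) := by
  simp only [chainWeight, Fin.prod_univ_castSucc, Fin.val_castSucc, Fin.val_last, Fin.succ_last,
    Fin.succ_castSucc]

theorem chainWeight_nonneg {r : ℕ → V → V → ℝ} (hr : ∀ j x y, 0 ≤ r j x y) (s : ℕ) {n : ℕ}
    (p : Fin (n + 1) → V) : 0 ≤ chainWeight r s p :=
  Finset.prod_nonneg fun _ _ => hr _ _ _

theorem chainWeight_pos {r : ℕ → V → V → ℝ} (hr : ∀ j x y, 0 < r j x y) (s : ℕ) {n : ℕ}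
    (p : Fin (n + 1) → V) : 0 < chainWeight r s p :=
  Finset.prod_pos fun _ _ => hr _ _ _

theorem measurable_finCons_left [MeasurableSpace V] {n : ℕ} (a : V) :
    Measurable (fun y : Fin n → V => (Fin.cons a y : Fin (n + 1) → V)) := by
  refine measurable_pi_lambda _ fun i => ?_
  cases i using Fin.cases with
  | zero => simp
  | succ j => simpa using measurable_pi_apply j

theorem measurable_chainWeight [MeasurableSpace V] {r : ℕ → V → V → ℝ}
    (hr : ∀ j, Measurable (Function.uncurry (r j))) (s n : ℕ) :
    Measurable (chainWeight r s : (Fin (n + 1) → V) → ℝ) :=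
  Finset.measurable_prod _ fun _ _ =>
    (hr _).comp (f := fun p : Fin (n + 1) → V => (p _, p _))
      ((measurable_pi_apply _).prodMk (measurable_pi_apply _))

theorem glue_of_le {K k : ℕ} (x : Fin (K + 1) → V) (y : Fin (K - k) → V) {i : Fin (K + 1)}
    (hi : (i : ℕ) ≤ k) : glue K k x y i = x i :=
  dif_pos hi

theorem glue_add_eq_cons {K k : ℕ} (hk : k ≤ K) (x : Fin (K + 1) → V) (y : Fin (K - k) → V)
    {t : ℕ} (ht : t ≤ K - k) :
    glue K k x y ⟨k + t, by omega⟩ =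
      (Fin.cons (x ⟨k, by omega⟩) y : Fin (K - k + 1) → V) ⟨t, by omega⟩ := by
  cases t with
  | zero => exact glue_of_le x y le_rfl
  | succ t =>
    rw [glue, dif_neg (by simp)]
    exact congrArg y (Fin.ext (by simp only; omega))

theorem chainWeight_glue (r : ℕ → V → V → ℝ) {K k : ℕ} (hk : k ≤ K) (x : Fin (K + 1) → V)
    (y : Fin (K - k) → V) :
    chainWeight r 0 (glue K k x y) =
      chainWeight r 0 (fun i : Fin (k + 1) => x (Fin.castLE (by omega) i)) *
        chainWeight r k (Fin.cons (x ⟨k, by omega⟩) y : Fin (K - k + 1) → V) := by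
  unfold chainWeight
  rw [← Fin.prod_congr' _ (Nat.add_sub_cancel' hk), Fin.prod_univ_add]
  congr 1 <;> refine Finset.prod_congr rfl fun j _ => ?_
  · rw [glue_of_le x y (by simp), glue_of_le x y (by simp)]
    rfl
  · have hcur := glue_add_eq_cons hk x y (t := j) (by omega)
    have hnext := glue_add_eq_cons hk x y (t := j + 1) (by omega)
    simp only [Fin.val_cast, Fin.val_natAdd, zero_add]
    exact congrArg₂ _ hcur hnext

section Integration

variable [MeasureSpace V] [SigmaFinite (volume : Measure V)]

theorem integrable_and_integral_chainWeight_cons {K : ℕ} {r : ℕ → V → V → ℝ} {φK : V → ℝ}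
    (hr : ∀ j, Measurable (Function.uncurry (r j))) (hr_nonneg : ∀ j x y, 0 ≤ r j x y)
    (hφK : Measurable φK) (hφK_nonneg : ∀ u, 0 ≤ φK u)
    (hfin : ∀ (j : ℕ) (x : V), Integrable (fun y => r (K - (j + 1)) x y * backward K r φK j y))
    (n s : ℕ) (hsn : s + n = K) (a : V) :
    Integrable (fun y : Fin n → V =>
        chainWeight r s (Fin.cons a y : Fin (n + 1) → V) *
          φK ((Fin.cons a y : Fin (n + 1) → V) (Fin.last n))) ∧
      ∫ y : Fin n → V,
          chainWeight r s (Fin.cons a y : Fin (n + 1) → V) *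
            φK ((Fin.cons a y : Fin (n + 1) → V) (Fin.last n)) =
        backward K r φK n a := by
  induction n generalizing s a with
  | zero =>
    have : IsProbabilityMeasure (volume : Measure (Fin 0 → V)) := ⟨by simp [volume_pi]⟩
    simp [chainWeight, backward]
  | succ n ih =>
    set f : (Fin (n + 1) → V) → ℝ := fun y =>
      chainWeight r s (Fin.cons a y : Fin (n + 2) → V) *
        φK ((Fin.cons a y : Fin (n + 2) → V) (Fin.last (n + 1)))
    set g : V → (Fin n → V) → ℝ := fun b y =>
      chainWeight r (s + 1) (Fin.cons b y : Fin (n + 1) → V) *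
        φK ((Fin.cons b y : Fin (n + 1) → V) (Fin.last n))
    have hs : K - (n + 1) = s := by omega
    have ih' := fun b => ih (s + 1) (by omega) b
    let e := MeasurableEquiv.piFinSuccAbove (fun _ : Fin (n + 1) => V) 0
    have he : MeasurePreserving e.symm ((volume : Measure V).prod volume) volume :=
      (volume_preserving_piFinSuccAbove (fun _ : Fin (n + 1) => V) 0).symm e
    have hfe : f ∘ e.symm = fun p => r s a p.1 * g p.1 p.2 := by
      ext ⟨b, y⟩
      have : e.symm (b, y) = Fin.cons b y := by simp [e]; rfl
      simp [f, g, this, chainWeight_cons, mul_assoc, ← Fin.succ_last]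
    have hg_nonneg : ∀ b y, 0 ≤ g b y := fun b y =>
      mul_nonneg (chainWeight_nonneg hr_nonneg _ _) (hφK_nonneg _)
    have hf_meas : Measurable f :=
      ((measurable_chainWeight hr s _).comp (measurable_finCons_left a)).mul
        (hφK.comp ((measurable_pi_apply _).comp (measurable_finCons_left a)))
    have hslice : ∀ b, ∫ y, r s a b * g b y = r s a b * backward K r φK n b := fun b => by
      rw [integral_const_mul, (ih' b).2]
    have hprod : Integrable (fun p : V × (Fin n → V) => r s a p.1 * g p.1 p.2)
        ((volume : Measure V).prod volume) := by
      have hmeas : AEStronglyMeasurable (fun p : V × (Fin n → V) => r s a p.1 * g p.1 p.2)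
          ((volume : Measure V).prod volume) :=
        hfe ▸ (hf_meas.comp e.symm.measurable).aestronglyMeasurable
      refine (integrable_prod_iff hmeas).2 ⟨ae_of_all _ fun b => (ih' b).1.const_mul (r s a b), ?_⟩
      -- the integrand is nonnegative, so `∫ ‖·‖` over a slice is the slice integral `hslice`
      have hnorm : ∀ b, ∫ y, ‖r s a b * g b y‖ = r s a b * backward K r φK n b := fun b => by
        simp_rw [Real.norm_of_nonneg (mul_nonneg (hr_nonneg _ _ _) (hg_nonneg b _)), hslice]
      simp_rw [hnorm, ← hs]
      exact hfin n a
    refine ⟨(he.integrable_comp_emb e.symm.measurableEmbedding).1 (hfe ▸ hprod), ?_⟩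
    calc ∫ y, f y = ∫ p, (f ∘ e.symm) p ∂(volume : Measure V).prod volume :=
          (he.integral_comp e.symm.measurableEmbedding f).symm
      _ = ∫ b, r s a b * backward K r φK n b := by
          rw [hfe, integral_prod _ hprod]
          simp_rw [hslice]
      _ = backward K r φK (n + 1) a := by rw [backward, hs]

theorem integral_glue_eq_backward {K k : ℕ} (hk : k ≤ K) {r : ℕ → V → V → ℝ} {φK : V → ℝ}
    (hr : ∀ j, Measurable (Function.uncurry (r j))) (hr_nonneg : ∀ j x y, 0 ≤ r j x y)
    (hφK : Measurable φK) (hφK_nonneg : ∀ u, 0 ≤ φK u)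
    (hfin : ∀ (j : ℕ) (x : V), Integrable (fun y => r (K - (j + 1)) x y * backward K r φK j y))
    (φ0 : V → ℝ) (x : Fin (K + 1) → V) :
    ∫ y : Fin (K - k) → V,
        φ0 (glue K k x y 0) * chainWeight r 0 (glue K k x y) * φK (glue K k x y (Fin.last K)) =
      φ0 (x 0) * chainWeight r 0 (fun i : Fin (k + 1) => x (Fin.castLE (by omega) i)) *
        backward K r φK (K - k) (x ⟨k, by omega⟩) := by
  have hlast : ∀ y, glue K k x y (Fin.last K) =
      (Fin.cons (x ⟨k, by omega⟩) y : Fin (K - k + 1) → V) (Fin.last (K - k)) := fun y => by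
    convert glue_add_eq_cons hk x y (le_refl (K - k)) using 2 <;> ext <;> simp only [Fin.val_last]
    omega
  simp_rw [glue_of_le x _ (i := 0) (Nat.zero_le k), chainWeight_glue r hk, hlast, mul_assoc,
    integral_const_mul]
  rw [(integrable_and_integral_chainWeight_cons hr hr_nonneg hφK hφK_nonneg hfin (K - k) k
    (by omega) _).2]

end Integration

end OptimalCoupling

open OptimalCoupling

/-- **The optimal coupling is a Markov chain with Doob transition kernel.** For
`p*(x_0,…,x_K) = φ_0(x_0) (∏_{j<K} r_j(x_j,x_{j+1})) φ_K(x_K) / Z` with `Z ∈ (0,∞)` the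
total integral, and with the backward potentials `φ⁻_k` assumed finite and strictly
positive everywhere, the conditional density `p*_{0:k+1}(x_0,…,x_{k+1}) / p*_{0:k}(x_0,…,x_k)`
(where `p*_{0:k}` is the marginal of `p*` on `(x_0,…,x_k)`) equals
`r_k(x_k, x_{k+1}) φ⁻_{k+1}(x_{k+1}) / φ⁻_k(x_k)`; in particular it depends only on
`(x_k, x_{k+1})`, so `p*` is a Markov chain with this transition kernel. -/
theorem optimal_coupling_markov_transition_kernel
    {d K : ℕ}
    (r : ℕ → (Fin d → ℝ) → (Fin d → ℝ) → ℝ)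
    (φ0 φK : (Fin d → ℝ) → ℝ)
    (hr : ∀ j, Measurable (Function.uncurry (r j)))
    (hrpos : ∀ j x y, 0 < r j x y)
    (hφ0pos : ∀ u, 0 < φ0 u)
    (hφK : Measurable φK) (hφKpos : ∀ u, 0 < φK u)
    (hfin : ∀ (j : ℕ) (x : Fin d → ℝ),
      Integrable (fun y => r (K - (j + 1)) x y * backward K r φK j y))
    (hbackpos : ∀ (j : ℕ) (x : Fin d → ℝ), 0 < backward K r φK j x)
    (Z : ℝ)
    (hZpos : 0 < Z)
    (pstar : (Fin (K + 1) → Fin d → ℝ) → ℝ)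
    (hpstar : pstar = fun x =>
      φ0 (x 0) * (∏ j : Fin K, r j (x (Fin.castSucc j)) (x (Fin.succ j))) *
        φK (x (Fin.last K)) / Z) :
    ∀ (k : ℕ) (hk : k < K) (x : Fin (K + 1) → Fin d → ℝ),
      (∫ y : Fin (K - (k + 1)) → Fin d → ℝ, pstar (glue K (k + 1) x y)) /
          (∫ y : Fin (K - k) → Fin d → ℝ, pstar (glue K k x y)) =
        r k (x ⟨k, by omega⟩) (x ⟨k + 1, by omega⟩) *
          backward K r φK (K - (k + 1)) (x ⟨k + 1, by omega⟩) /
          backward K r φK (K - k) (x ⟨k, by omega⟩) := by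
  intro k hk x
  have hr_nonneg j x y := (hrpos j x y).le
  have hφK_nonneg u := (hφKpos u).le
  have hprefix : chainWeight r 0 (fun i : Fin (k + 2) => x (Fin.castLE (by omega) i)) =
      chainWeight r 0 (fun i : Fin (k + 1) => x (Fin.castLE (by omega) i)) *
        r k (x ⟨k, by omega⟩) (x ⟨k + 1, by omega⟩) := by
    rw [chainWeight_eq_mul_last, zero_add]
    rfl
  simp_rw [hpstar, ← chainWeight_zero, integral_div]
  rw [integral_glue_eq_backward (by omega) hr hr_nonneg hφK hφK_nonneg hfin,
    integral_glue_eq_backward hk.le hr hr_nonneg hφK hφK_nonneg hfin, hprefix]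
  have hφ0_ne := (hφ0pos (x 0)).ne'
  have hprefix_ne :=
    (chainWeight_pos hrpos 0 fun i : Fin (k + 1) => x (Fin.castLE (by omega) i)).ne'
  have hback_ne := (hbackpos (K - k) (x ⟨k, by omega⟩)).ne'
  field_simp
end

section
/- Let ε > 0, x* ∈ ℝ^d, let Q, R be symmetric positive definite d×d real matrices, and define the LQR transition cost ℓ(x, y) := ½ (x − x*)ᵀ Q (x − x*) + ½ (y − x)ᵀ R (y − x). Let α ∈ ℝ^d and let P be a symmetric positive definite d×d matrix. Set P⁻ := Q/ε + (ε R⁻¹ + P⁻¹)⁻¹ and α⁻ := (P⁻)⁻¹ ( (Q/ε) x* + (ε R⁻¹ + P⁻¹)⁻¹ α ). Then P⁻ is symmetric positive definite and there exists a constant c > 0, independent of x, such that for all x ∈ ℝ^d, ∫_{ℝ^d} exp(−ℓ(x, y)/ε) · N(y | α, P⁻¹) dy = c · N(x | α⁻, (P⁻)⁻¹). -/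
/-!
Dividing the cost by `ε` replaces `Q, R` by `Q/ε, R/ε` and turns `εR⁻¹` into `(R/ε)⁻¹`, so it
suffices to treat `ε = 1`. There the integrand is `exp(-½ (x-x*)ᵀQ(x-x*))` times a Gaussian in `y`
with exponent `-½ [(y-x)ᵀR(y-x) + (y-α)ᵀP(y-α)]`. Completing the square in `y` splits off
`(x-α)ᵀ(R⁻¹+P⁻¹)⁻¹(x-α)`, and integrating out `y` only contributes the factor
`(2π)^{d/2} det(R+P)^{-1/2}`. Completing the square once more, now in `x`, merges the two quadratic
forms in `x` into one with precision `Q + (R⁻¹+P⁻¹)⁻¹`, up to a constant factor.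
-/

open MeasureTheory Matrix

/-- The Gaussian density `N(x|μ,Σ) = (2π)^{-d/2} (det Σ)^{-1/2} exp(-½ (x-μ)ᵀ Σ⁻¹ (x-μ))`
on `ℝ^d`. -/
noncomputable def gaussPDF (d : ℕ) (m : Fin d → ℝ) (S : Matrix (Fin d) (Fin d) ℝ)
    (x : Fin d → ℝ) : ℝ :=
  (2 * Real.pi) ^ (-(d : ℝ) / 2) * S.det ^ (-(1 : ℝ) / 2) *
    Real.exp (-(1 / 2) * ((x - m) ⬝ᵥ (S⁻¹ *ᵥ (x - m))))

/-- The LQR transition cost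
`ℓ(x, y) := ½ (x − x*)ᵀ Q (x − x*) + ½ (y − x)ᵀ R (y − x)`. -/
noncomputable def lqrCost {d : ℕ} (xs : Fin d → ℝ) (Q R : Matrix (Fin d) (Fin d) ℝ)
    (x y : Fin d → ℝ) : ℝ :=
  (1 / 2) * ((x - xs) ⬝ᵥ (Q *ᵥ (x - xs))) + (1 / 2) * ((y - x) ⬝ᵥ (R *ᵥ (y - x)))

lemma Matrix.PosDef.isSymm {n : Type*} {S : Matrix n n ℝ} (hS : S.PosDef) : S.IsSymm :=
  isHermitian_iff_isSymm.mp hS.isHermitian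

variable {ι : Type*} [Fintype ι]

lemma Matrix.PosDef.isUnit_det [DecidableEq ι] {S : Matrix ι ι ℝ} (hS : S.PosDef) :
    IsUnit S.det :=
  isUnit_iff_ne_zero.mpr hS.det_pos.ne'

namespace Matrix

lemma IsSymm.dotProduct_mulVec_comm {C : Matrix ι ι ℝ} (hC : C.IsSymm) (u v : ι → ℝ) :
    u ⬝ᵥ (C *ᵥ v) = v ⬝ᵥ (C *ᵥ u) := by
  rw [dotProduct_mulVec, ← mulVec_transpose, hC.eq, dotProduct_comm]

lemma IsSymm.sub_dotProduct_mulVec_sub {C : Matrix ι ι ℝ} (hC : C.IsSymm) (u w : ι → ℝ) :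
    (u - w) ⬝ᵥ (C *ᵥ (u - w)) = u ⬝ᵥ (C *ᵥ u) - 2 * u ⬝ᵥ (C *ᵥ w) + w ⬝ᵥ (C *ᵥ w) := by
  rw [mulVec_sub, dotProduct_sub, sub_dotProduct, sub_dotProduct, hC.dotProduct_mulVec_comm w u]
  ring

lemma inv_add_inv_inv [DecidableEq ι] {A B : Matrix ι ι ℝ} (hA : IsUnit A.det)
    (hB : IsUnit B.det) : (A⁻¹ + B⁻¹)⁻¹ = B * (A + B)⁻¹ * A := by
  rw [inv_add_inv (iff_of_true ((isUnit_iff_isUnit_det A).mpr hA)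
      ((isUnit_iff_isUnit_det B).mpr hB)),
    mul_inv_rev, mul_inv_rev, nonsing_inv_nonsing_inv _ hA, nonsing_inv_nonsing_inv _ hB,
    Matrix.mul_assoc]

/-- Completing the square. -/
lemma add_dotProduct_mulVec_eq_of_isSymm [DecidableEq ι] {M N : Matrix ι ι ℝ} (hM : M.IsSymm)
    (hN : N.IsSymm) (h : IsUnit (M + N).det) (a b z : ι → ℝ) :
    (z - a) ⬝ᵥ (M *ᵥ (z - a)) + (z - b) ⬝ᵥ (N *ᵥ (z - b)) =
      (z - (M + N)⁻¹ *ᵥ (M *ᵥ a + N *ᵥ b)) ⬝ᵥ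
          ((M + N) *ᵥ (z - (M + N)⁻¹ *ᵥ (M *ᵥ a + N *ᵥ b))) +
        (a - b) ⬝ᵥ ((N * (M + N)⁻¹ * M) *ᵥ (a - b)) := by
  set S := M + N with hS_def
  set v := S⁻¹ *ᵥ (M *ᵥ (a - b))
  have hSv : S *ᵥ v = M *ᵥ (a - b) := by
    rw [mulVec_mulVec, mul_nonsing_inv _ h, one_mulVec]
  have hcenter : S⁻¹ *ᵥ (M *ᵥ a + N *ᵥ b) = b + v := by
    have : M *ᵥ a + N *ᵥ b = S *ᵥ b + M *ᵥ (a - b) := by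
      rw [hS_def, add_mulVec, mulVec_sub]; abel
    rw [this, mulVec_add, mulVec_mulVec, nonsing_inv_mul _ h, one_mulVec]
  have hrem : v ⬝ᵥ (M *ᵥ (a - b)) + (a - b) ⬝ᵥ ((N * S⁻¹ * M) *ᵥ (a - b)) =
      (a - b) ⬝ᵥ (M *ᵥ (a - b)) := by
    have hMv : M *ᵥ v = (M * S⁻¹ * M) *ᵥ (a - b) := by
      simp only [v, mulVec_mulVec, Matrix.mul_assoc]
    rw [hM.dotProduct_mulVec_comm, ← dotProduct_add, hMv, ← add_mulVec, ← Matrix.add_mul,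
      ← Matrix.add_mul, ← hS_def, mul_nonsing_inv _ h, Matrix.one_mul]
  rw [hcenter, show z - a = (z - b) - (a - b) by abel, show z - (b + v) = (z - b) - v by abel,
    hM.sub_dotProduct_mulVec_sub, (hM.add hN).sub_dotProduct_mulVec_sub, hSv, hS_def,
    add_mulVec, dotProduct_add]
  linear_combination -hrem

lemma exists_exp_mul_exp_eq_of_isSymm [DecidableEq ι] {M N : Matrix ι ι ℝ} (hM : M.IsSymm)
    (hN : N.IsSymm) (h : IsUnit (M + N).det) (a b : ι → ℝ) :
    ∃ c > 0, ∀ z, Real.exp (-(1 / 2) * ((z - a) ⬝ᵥ (M *ᵥ (z - a)))) *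
        Real.exp (-(1 / 2) * ((z - b) ⬝ᵥ (N *ᵥ (z - b)))) =
      c * Real.exp (-(1 / 2) * ((z - (M + N)⁻¹ *ᵥ (M *ᵥ a + N *ᵥ b)) ⬝ᵥ
        ((M + N) *ᵥ (z - (M + N)⁻¹ *ᵥ (M *ᵥ a + N *ᵥ b))))) :=
  ⟨_, Real.exp_pos (-(1 / 2) * ((a - b) ⬝ᵥ ((N * (M + N)⁻¹ * M) *ᵥ (a - b)))), fun z => by
    rw [← Real.exp_add, ← Real.exp_add, ← mul_add, ← mul_add,
      add_dotProduct_mulVec_eq_of_isSymm hM hN h, add_comm]⟩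

end Matrix

namespace MeasureTheory

lemma integral_comp_mulVec [DecidableEq ι] {E : Type*} [NormedAddCommGroup E] [NormedSpace ℝ E]
    {M : Matrix ι ι ℝ} (hM : IsUnit M.det) (f : (ι → ℝ) → E) :
    ∫ x, f (M *ᵥ x) = |M.det|⁻¹ • ∫ x, f x := by
  let e : (ι → ℝ) ≃ᵐ (ι → ℝ) := (M.toLinearEquiv' (M.invertibleOfIsUnitDet hM)
    ).toContinuousLinearEquiv.toHomeomorph.toMeasurableEquiv
  have hmap : Measure.map (toLin' M) volume = ENNReal.ofReal |M.det|⁻¹ • volume := by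
    simpa [LinearMap.det_toLin'] using Measure.map_linearMap_addHaar_pi_eq_smul_addHaar
      (f := toLin' M) (by simpa using hM.ne_zero) (volume : Measure (ι → ℝ))
  change ∫ x, f (e x) = _
  rw [← integral_map_equiv, show ⇑e = ⇑(toLin' M) from rfl, hmap, integral_smul_measure,
    ENNReal.toReal_ofReal (by positivity)]

lemma integral_exp_neg_half_dotProduct_self :
    ∫ x : ι → ℝ, Real.exp (-(1 / 2) * (x ⬝ᵥ x)) = (2 * Real.pi) ^ ((Fintype.card ι : ℝ) / 2) := by
  have hprod (x : ι → ℝ) :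
      Real.exp (-(1 / 2) * (x ⬝ᵥ x)) = ∏ i, Real.exp (-(1 / 2) * x i ^ 2) := by
    rw [← Real.exp_sum, dotProduct, Finset.mul_sum]
    simp only [sq]
  simp only [hprod]
  rw [integral_fintype_prod_volume_eq_pow (fun t : ℝ => Real.exp (-(1 / 2) * t ^ 2)),
    integral_gaussian, Real.sqrt_eq_rpow, ← Real.rpow_natCast, ← Real.rpow_mul (by positivity)]
  norm_num
  ring_nf

end MeasureTheory

open scoped MatrixOrder in
lemma Matrix.PosDef.integral_exp_neg_half_quadratic [DecidableEq ι] {S : Matrix ι ι ℝ}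
    (hS : S.PosDef) (m : ι → ℝ) :
    ∫ y : ι → ℝ, Real.exp (-(1 / 2) * ((y - m) ⬝ᵥ (S *ᵥ (y - m)))) =
      (2 * Real.pi) ^ ((Fintype.card ι : ℝ) / 2) * S.det ^ (-(1 : ℝ) / 2) := by
  rw [integral_sub_right_eq_self (fun y => Real.exp (-(1 / 2) * (y ⬝ᵥ (S *ᵥ y)))) m]
  set T := CFC.sqrt S
  have hTT : T * T = S := CFC.sqrt_mul_sqrt_self S hS.posSemidef.nonneg
  have hT : T.IsSymm := isHermitian_iff_isSymm.mp (CFC.sqrt_nonneg S).posSemidef.isHermitian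
  have hdetT : T.det ^ 2 = S.det := by rw [sq, ← det_mul, hTT]
  have hquad (y : ι → ℝ) : y ⬝ᵥ (S *ᵥ y) = (T *ᵥ y) ⬝ᵥ (T *ᵥ y) := by
    rw [← hTT, ← mulVec_mulVec, dotProduct_mulVec, ← mulVec_transpose, hT.eq]
  have hdetT_ne : T.det ≠ 0 := fun h => hS.det_pos.ne' (by rw [← hdetT, h]; simp)
  simp only [hquad]
  rw [integral_comp_mulVec (isUnit_iff_ne_zero.mpr hdetT_ne)
      (fun x => Real.exp (-(1 / 2) * (x ⬝ᵥ x))),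
    integral_exp_neg_half_dotProduct_self, smul_eq_mul, mul_comm, ← hdetT,
    ← Real.sqrt_sq_eq_abs, Real.sqrt_eq_rpow, neg_div, Real.rpow_neg (sq_nonneg _)]

lemma Matrix.PosDef.integral_exp_neg_half_add_quadratic [DecidableEq ι] {A P : Matrix ι ι ℝ}
    (hA : A.PosDef) (hP : P.PosDef) (x α : ι → ℝ) :
    ∫ y : ι → ℝ, Real.exp (-(1 / 2) * ((y - x) ⬝ᵥ (A *ᵥ (y - x)) + (y - α) ⬝ᵥ (P *ᵥ (y - α)))) =
      (2 * Real.pi) ^ ((Fintype.card ι : ℝ) / 2) * (A + P).det ^ (-(1 : ℝ) / 2) *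
        Real.exp (-(1 / 2) * ((x - α) ⬝ᵥ ((A⁻¹ + P⁻¹)⁻¹ *ᵥ (x - α)))) := by
  simp only [add_dotProduct_mulVec_eq_of_isSymm hA.isSymm hP.isSymm (hA.add hP).isUnit_det,
    mul_add, Real.exp_add]
  rw [integral_mul_const, (hA.add hP).integral_exp_neg_half_quadratic,
    inv_add_inv_inv hA.isUnit_det hP.isUnit_det]

lemma lqrCost_div {d : ℕ} (xs : Fin d → ℝ) (Q R : Matrix (Fin d) (Fin d) ℝ) (x y : Fin d → ℝ)
    (ε : ℝ) : lqrCost xs Q R x y / ε = lqrCost xs (ε⁻¹ • Q) (ε⁻¹ • R) x y := by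
  simp only [lqrCost, smul_mulVec, dotProduct_smul, smul_eq_mul]
  ring

lemma Matrix.PosDef.exists_gaussPDF_inv_eq {d : ℕ} {S : Matrix (Fin d) (Fin d) ℝ}
    (hS : S.PosDef) (m : Fin d → ℝ) :
    ∃ c > 0, ∀ x, gaussPDF d m S⁻¹ x = c * Real.exp (-(1 / 2) * ((x - m) ⬝ᵥ (S *ᵥ (x - m)))) :=
  ⟨(2 * Real.pi) ^ (-(d : ℝ) / 2) * S⁻¹.det ^ (-(1 : ℝ) / 2),
    by have := hS.inv.det_pos; positivity, fun x => by
    rw [gaussPDF, nonsing_inv_nonsing_inv _ hS.isUnit_det]⟩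

lemma exists_integral_exp_neg_lqrCost_mul_gaussPDF {d : ℕ} (xs α : Fin d → ℝ)
    {Q R P : Matrix (Fin d) (Fin d) ℝ} (hQ : Q.PosDef) (hR : R.PosDef) (hP : P.PosDef) :
    ∃ c > 0, ∀ x, ∫ y, Real.exp (-lqrCost xs Q R x y) * gaussPDF d α P⁻¹ y =
      c * gaussPDF d ((Q + (R⁻¹ + P⁻¹)⁻¹)⁻¹ *ᵥ (Q *ᵥ xs + (R⁻¹ + P⁻¹)⁻¹ *ᵥ α))
        (Q + (R⁻¹ + P⁻¹)⁻¹)⁻¹ x := by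
  set B := (R⁻¹ + P⁻¹)⁻¹
  have hB : B.PosDef := (hR.inv.add hP.inv).inv
  obtain ⟨c₀, hc₀, hpdf₀⟩ := hP.exists_gaussPDF_inv_eq α
  obtain ⟨c₁, hc₁, hpdf₁⟩ := (hQ.add hB).exists_gaussPDF_inv_eq ((Q + B)⁻¹ *ᵥ (Q *ᵥ xs + B *ᵥ α))
  obtain ⟨c₂, hc₂, hprod⟩ := exists_exp_mul_exp_eq_of_isSymm hQ.isSymm hB.isSymm
    (hQ.add hB).isUnit_det xs α
  have hRP := (hR.add hP).det_pos
  refine ⟨c₀ * ((2 * Real.pi) ^ ((Fintype.card (Fin d) : ℝ) / 2) * (R + P).det ^ (-(1 : ℝ) / 2)) *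
    c₂ * c₁⁻¹, by positivity, fun x => ?_⟩
  have hintegrand (y : Fin d → ℝ) :
      Real.exp (-lqrCost xs Q R x y) * gaussPDF d α P⁻¹ y =
        c₀ * Real.exp (-(1 / 2) * ((x - xs) ⬝ᵥ (Q *ᵥ (x - xs)))) *
          Real.exp (-(1 / 2) * ((y - x) ⬝ᵥ (R *ᵥ (y - x)) + (y - α) ⬝ᵥ (P *ᵥ (y - α)))) := by
    rw [hpdf₀, lqrCost, mul_left_comm, ← Real.exp_add, mul_assoc c₀, ← Real.exp_add]
    congr 2
    ring
  simp only [hintegrand]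
  rw [integral_const_mul, hR.integral_exp_neg_half_add_quadratic hP, hpdf₁, mul_mul_mul_comm,
    hprod x]
  field_simp

/-- **Backward propagation of a Gaussian potential through the LQR kernel.** For `ε > 0`,
`x* ∈ ℝ^d`, symmetric positive definite `Q, R`, a mean `α` and a symmetric positive
definite precision `P`, set `P⁻ := Q/ε + (ε R⁻¹ + P⁻¹)⁻¹` and
`α⁻ := (P⁻)⁻¹((Q/ε) x* + (ε R⁻¹ + P⁻¹)⁻¹ α)`. Then `P⁻` is symmetric positive definite
and there is a constant `c > 0`, independent of `x`, with
`∫ exp(−ℓ(x,y)/ε) N(y|α, P⁻¹) dy = c · N(x|α⁻, (P⁻)⁻¹)` for all `x`. -/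
theorem backward_gaussian_potential_propagation
    {d : ℕ} (ε : ℝ) (hε : 0 < ε) (xs α : Fin d → ℝ)
    (Q R P : Matrix (Fin d) (Fin d) ℝ)
    (hQ : Q.PosDef) (hR : R.PosDef) (hP : P.PosDef) :
    (ε⁻¹ • Q + (ε • R⁻¹ + P⁻¹)⁻¹).PosDef ∧
      ∃ c : ℝ, 0 < c ∧
        ∀ x : Fin d → ℝ,
          (∫ y : Fin d → ℝ,
              Real.exp (-(lqrCost xs Q R x y) / ε) * gaussPDF d α P⁻¹ y) =
            c * gaussPDF d
              ((ε⁻¹ • Q + (ε • R⁻¹ + P⁻¹)⁻¹)⁻¹ *ᵥ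
                ((ε⁻¹ • Q) *ᵥ xs + (ε • R⁻¹ + P⁻¹)⁻¹ *ᵥ α))
              ((ε⁻¹ • Q + (ε • R⁻¹ + P⁻¹)⁻¹)⁻¹) x := by
  have hQε : (ε⁻¹ • Q).PosDef := hQ.smul (inv_pos.mpr hε)
  have hRε : (ε⁻¹ • R).PosDef := hR.smul (inv_pos.mpr hε)
  have hRε_inv : (ε⁻¹ • R)⁻¹ = ε • R⁻¹ := inv_eq_left_inv <| by
    simp [smul_smul, hε.ne', nonsing_inv_mul _ hR.isUnit_det]
  refine ⟨hRε_inv ▸ hQε.add (hRε.inv.add hP.inv).inv, ?_⟩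
  simp only [neg_div, lqrCost_div, ← hRε_inv]
  exact exists_integral_exp_neg_lqrCost_mul_gaussPDF xs α hQε hRε hP
end
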